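/- Let L > 0, 2 < p < 6 and 0 < α < 1/2 be such that (p−2)/(2α+1) < 2. Then for every δ > 0 there exist finite constants C₁ and C₂ (depending only on p, α, L and δ) such that for all λ > 0 and every continuous φ : [0,L] → ℂ with finite α-Hölder seminorm: λ ‖φ‖_p^p ≤ C₁ λ ‖φ‖_2^p + C₂ λ^{(4α+2)/(4α+4−p)} ‖φ‖_2^{(4αp+4)/(4α+4−p)} + δ ‖φ‖_{Hol,α}². -/

import Mathlib

/-!
Averaging `‖φ‖²` over a window of length `ℓ ≤ L` containing `t` and using Hölder continuity gives
`‖φ t‖² ≲ Q / ℓ + Hol² ℓ^(2α)` with `Q = ‖φ‖₂²`; optimising in `ℓ` bounds `sup ‖φ‖²` by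
`Q / L + Q^(2α/(2α+1)) Hol^(2/(2α+1))`. Then `‖φ‖_p^p ≤ (sup ‖φ‖²)^((p-2)/2) Q`, in which `Hol²`
enters with the power `θ = (p-2)/(4α+2)`, and `θ < 1` because `(p-2)/(2α+1) < 2`.
Young's inequality with exponents `1/θ` and `1/(1-θ)` splits that term into `δ Hol²` plus
`C λ^(1/(1-θ))` times a power of `Q`.
-/

open Real Set Filter Topology

namespace Real

theorem rpow_mul_le_mul_add_mul_rpow {a b θ δ : ℝ} (ha : 0 ≤ a) (hb : 0 ≤ b) (hθ₀ : 0 < θ)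
    (hθ₁ : θ < 1) (hδ : 0 < δ) :
    a ^ θ * b ≤ δ * a + δ ^ (-θ / (1 - θ)) * b ^ (1 / (1 - θ)) := by
  have hθ' : 0 < 1 - θ := by linarith
  -- weighted AM-GM with weights `θ, 1 - θ` applied to these two numbers
  have key : (δ * a) ^ θ * (δ ^ (-θ / (1 - θ)) * b ^ (1 / (1 - θ))) ^ (1 - θ) = a ^ θ * b := by
    rw [mul_rpow hδ.le ha, mul_rpow (by positivity) (by positivity), ← rpow_mul hδ.le,
      ← rpow_mul hb, div_mul_cancel₀ _ hθ'.ne', one_div_mul_cancel hθ'.ne', rpow_one]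
    have : δ ^ θ * δ ^ (-θ) = 1 := by rw [← rpow_add hδ]; simp
    linear_combination (a ^ θ * b) * this
  rw [← key]
  calc _ ≤ θ * (δ * a) + (1 - θ) * (δ ^ (-θ / (1 - θ)) * b ^ (1 / (1 - θ))) :=
        geom_mean_le_arith_mean2_weighted hθ₀.le hθ'.le (by positivity) (by positivity)
          (by ring)
    _ ≤ _ := by
        have := mul_nonneg hδ.le ha
        have : 0 ≤ δ ^ (-θ / (1 - θ)) * b ^ (1 / (1 - θ)) := by positivity
        nlinarith

theorem max_rpow_le_rpow_add_rpow {u v : ℝ} (r : ℝ) (hu : 0 ≤ u) (hv : 0 ≤ v) :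
    max u v ^ r ≤ u ^ r + v ^ r := by
  rcases le_total u v with h | h
  · rw [max_eq_right h]; linarith [rpow_nonneg hu r]
  · rw [max_eq_left h]; linarith [rpow_nonneg hv r]

theorem rpow_eq_sqrt_rpow {x : ℝ} (hx : 0 ≤ x) (y : ℝ) : x ^ y = √x ^ (2 * y) := by
  rw [sqrt_eq_rpow, ← rpow_mul hx, one_div, inv_mul_cancel_left₀ two_ne_zero]

end Real

theorem nonpos_of_forall_le_mul_rpow {x b β L : ℝ} (hL : 0 < L) (hβ : 0 < β)
    (h : ∀ ℓ ∈ Ioc 0 L, x ≤ b * ℓ ^ β) : x ≤ 0 := by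
  have hlim : Tendsto (fun ℓ : ℝ => b * ℓ ^ β) (𝓝[>] 0) (𝓝 0) := by
    have : Tendsto (fun ℓ : ℝ => b * ℓ ^ β) (𝓝 0) (𝓝 (b * 0 ^ β)) :=
      (continuousAt_rpow_const 0 β (Or.inr hβ.le)).tendsto.const_mul b
    rw [zero_rpow hβ.ne', mul_zero] at this
    exact this.mono_left nhdsWithin_le_nhds
  exact ge_of_tendsto hlim (eventually_of_mem (Ioc_mem_nhdsGT_of_mem ⟨le_rfl, hL⟩) h)

theorem le_two_mul_max_of_forall_le_div_add_mul_rpow {x a b β L : ℝ} (hL : 0 < L) (ha : 0 ≤ a)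
    (hβ : 0 < β) (h : ∀ ℓ ∈ Ioc 0 L, x ≤ a / ℓ + b * ℓ ^ β) :
    x ≤ 2 * max (a / L) (a ^ (β / (β + 1)) * b ^ (1 / (β + 1))) := by
  have hmax : a / L ≤ max (a / L) (a ^ (β / (β + 1)) * b ^ (1 / (β + 1))) := le_max_left _ _
  rcases le_or_gt (b * L ^ (β + 1)) a with hba | hab
  · have hbL : b * L ^ β ≤ a / L := by
      rw [le_div_iff₀ hL, mul_assoc, ← rpow_add_one hL.ne']; exact hba
    have := h L ⟨hL, le_rfl⟩
    linarith
  rcases ha.eq_or_lt with rfl | ha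
  · have := nonpos_of_forall_le_mul_rpow hL hβ (by simpa using h)
    have : 0 ≤ max (0 / L) (0 ^ (β / (β + 1)) * b ^ (1 / (β + 1))) := by simp
    linarith
  have hb : 0 < b := by
    by_contra! hb0
    have := mul_nonpos_of_nonpos_of_nonneg hb0 (rpow_nonneg hL.le (β + 1))
    linarith
  -- the `ℓ` at which `a / ℓ = b * ℓ ^ β`
  set ℓ := (a / b) ^ (1 / (β + 1)) with hℓ
  have hβ1 : 0 < β + 1 := by linarith
  have hℓ0 : 0 < ℓ := by positivity
  have hℓpow : ℓ ^ (β + 1) = a / b := by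
    rw [hℓ, ← rpow_mul (by positivity), one_div_mul_cancel hβ1.ne', rpow_one]
  have hℓL : ℓ ≤ L := by
    rw [← rpow_le_rpow_iff hℓ0.le hL.le hβ1, hℓpow, div_le_iff₀ hb]; linarith
  have hbal : a / ℓ = b * ℓ ^ β := by
    rw [div_eq_iff hℓ0.ne', mul_assoc, ← rpow_add_one hℓ0.ne', hℓpow]; field_simp
  have hval : b * ℓ ^ β = a ^ (β / (β + 1)) * b ^ (1 / (β + 1)) := by
    rw [hℓ, ← rpow_mul (by positivity), div_rpow ha.le hb.le, one_div_mul_eq_div]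
    rw [show 1 / (β + 1) = 1 - β / (β + 1) by field_simp; ring, rpow_sub hb, rpow_one]
    field_simp
  have := h ℓ ⟨hℓ0, hℓL⟩
  have := le_max_right (a / L) (a ^ (β / (β + 1)) * b ^ (1 / (β + 1)))
  linarith

section Holder

variable {E : Type*} [NormedAddCommGroup E] {φ : ℝ → E} {L α Hol : ℝ}

theorem sq_norm_div_two_le_of_holder (hα : 0 ≤ α) (hφ : ContinuousOn φ (Icc 0 L))
    (hHol : 0 ≤ Hol)
    (hHolder : ∀ x ∈ Icc 0 L, ∀ y ∈ Icc 0 L, ‖φ y - φ x‖ ≤ Hol * |y - x| ^ α)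
    {t : ℝ} (ht : t ∈ Icc 0 L) {ℓ : ℝ} (hℓ : ℓ ∈ Ioc 0 L) :
    ‖φ t‖ ^ 2 / 2 ≤ (∫ u in (0 : ℝ)..L, ‖φ u‖ ^ 2) / ℓ + Hol ^ 2 * ℓ ^ (2 * α) := by
  obtain ⟨ht0, htL⟩ := ht
  obtain ⟨hℓ0, hℓL⟩ := hℓ
  set a := min t (L - ℓ)
  have ha0 : 0 ≤ a := le_min ht0 (by linarith)
  have haL : a + ℓ ≤ L := by linarith [min_le_right t (L - ℓ)]
  have hta : t - ℓ ≤ a := le_min (by linarith) (by linarith)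
  have hint : ∀ b c, 0 ≤ b → b ≤ c → c ≤ L →
      IntervalIntegrable (fun u => ‖φ u‖ ^ 2) MeasureTheory.volume b c := fun b c hb hbc hcL =>
    ((hφ.norm.pow 2).mono (Icc_subset_Icc hb hcL)).intervalIntegrable_of_Icc hbc
  have hpt : ∀ y ∈ Icc a (a + ℓ), ‖φ t‖ ^ 2 / 2 - Hol ^ 2 * ℓ ^ (2 * α) ≤ ‖φ y‖ ^ 2 := by
    rintro y ⟨hay, hyℓ⟩
    have hdist : |t - y| ≤ ℓ := abs_le.mpr ⟨by linarith [min_le_left t (L - ℓ)], by linarith⟩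
    have hclose : ‖φ t‖ ≤ ‖φ y‖ + Hol * ℓ ^ α := by
      have := (hHolder y ⟨ha0.trans hay, hyℓ.trans haL⟩ t ⟨ht0, htL⟩).trans
        (mul_le_mul_of_nonneg_left (rpow_le_rpow (abs_nonneg _) hdist hα) hHol)
      linarith [norm_sub_norm_le (φ t) (φ y)]
    have hsq : (Hol * ℓ ^ α) ^ 2 = Hol ^ 2 * ℓ ^ (2 * α) := by
      rw [mul_pow, mul_comm 2 α, rpow_mul hℓ0.le, rpow_two]
    nlinarith [pow_le_pow_left₀ (norm_nonneg _) hclose 2, sq_nonneg (‖φ y‖ - Hol * ℓ ^ α)]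
  have hlocal := intervalIntegral.integral_mono_on (by linarith) intervalIntegrable_const
    (hint a (a + ℓ) ha0 (by linarith) haL) hpt
  have hglobal : ∫ u in a..a + ℓ, ‖φ u‖ ^ 2 ≤ ∫ u in (0 : ℝ)..L, ‖φ u‖ ^ 2 :=
    intervalIntegral.integral_mono_interval ha0 (by linarith) haL
      (Eventually.of_forall fun _ => by positivity) (hint 0 L le_rfl (by linarith) le_rfl)
  rw [intervalIntegral.integral_const, add_sub_cancel_left, smul_eq_mul] at hlocal
  rw [← sub_le_iff_le_add, le_div_iff₀ hℓ0, mul_comm]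
  exact hlocal.trans hglobal

theorem sq_norm_le_of_holder (hα : 0 < α) (hL : 0 < L) (hφ : ContinuousOn φ (Icc 0 L))
    (hHol : 0 ≤ Hol)
    (hHolder : ∀ x ∈ Icc 0 L, ∀ y ∈ Icc 0 L, ‖φ y - φ x‖ ≤ Hol * |y - x| ^ α)
    {t : ℝ} (ht : t ∈ Icc 0 L) :
    ‖φ t‖ ^ 2 ≤ 4 * max ((∫ u in (0 : ℝ)..L, ‖φ u‖ ^ 2) / L)
      ((∫ u in (0 : ℝ)..L, ‖φ u‖ ^ 2) ^ (2 * α / (2 * α + 1)) * (Hol ^ 2) ^ (1 / (2 * α + 1))) := by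
  have := le_two_mul_max_of_forall_le_div_add_mul_rpow hL
    (intervalIntegral.integral_nonneg hL.le fun u _ => by positivity) (by positivity)
    fun ℓ hℓ => sq_norm_div_two_le_of_holder hα.le hφ hHol hHolder ht hℓ
  linarith

theorem integral_norm_rpow_le_of_sq_norm_le {p M : ℝ} (hL : 0 ≤ L) (hp : 2 ≤ p)
    (hφ : ContinuousOn φ (Icc 0 L)) (hM : ∀ t ∈ Icc 0 L, ‖φ t‖ ^ 2 ≤ M) :
    ∫ t in (0 : ℝ)..L, ‖φ t‖ ^ p ≤ M ^ ((p - 2) / 2) * ∫ t in (0 : ℝ)..L, ‖φ t‖ ^ 2 := by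
  have hpt : ∀ t ∈ Icc 0 L, ‖φ t‖ ^ p ≤ M ^ ((p - 2) / 2) * ‖φ t‖ ^ 2 := by
    intro t ht
    have hsplit : ‖φ t‖ ^ p = (‖φ t‖ ^ 2) ^ ((p - 2) / 2) * ‖φ t‖ ^ 2 := by
      rw [← rpow_two, ← rpow_mul (norm_nonneg _), ← rpow_add' (norm_nonneg _) (by linarith)]
      ring_nf
    rw [hsplit]
    gcongr
    exact hM t ht
  rw [← intervalIntegral.integral_const_mul]
  refine intervalIntegral.integral_mono_on hL ?_ ?_ hpt <;>
    refine ContinuousOn.intervalIntegrable_of_Icc hL ?_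
  · exact hφ.norm.rpow_const fun _ _ => Or.inr (by linarith)
  · exact continuousOn_const.mul (hφ.norm.pow 2)

theorem integral_norm_rpow_le_of_holder {p : ℝ} (hα : 0 < α) (hL : 0 < L) (hp : 2 ≤ p)
    (hφ : ContinuousOn φ (Icc 0 L)) (hHol : 0 ≤ Hol)
    (hHolder : ∀ x ∈ Icc 0 L, ∀ y ∈ Icc 0 L, ‖φ y - φ x‖ ≤ Hol * |y - x| ^ α) :
    ∫ t in (0 : ℝ)..L, ‖φ t‖ ^ p ≤
      4 ^ ((p - 2) / 2) / L ^ ((p - 2) / 2) * (∫ t in (0 : ℝ)..L, ‖φ t‖ ^ 2) ^ (p / 2)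
        + 4 ^ ((p - 2) / 2) * (∫ t in (0 : ℝ)..L, ‖φ t‖ ^ 2) ^ ((α * p + 1) / (2 * α + 1))
          * (Hol ^ 2) ^ ((p - 2) / (4 * α + 2)) := by
  set Q := ∫ t in (0 : ℝ)..L, ‖φ t‖ ^ 2
  set r := (p - 2) / 2
  have hQ : 0 ≤ Q := intervalIntegral.integral_nonneg hL.le fun u _ => by positivity
  have hrpow_succ : ∀ e : ℝ, e + 1 ≠ 0 → Q ^ (e + 1) = Q ^ e * Q := fun e he => by
    rw [rpow_add' hQ he, rpow_one]
  calc ∫ t in (0 : ℝ)..L, ‖φ t‖ ^ p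
      ≤ (4 * max (Q / L) (Q ^ (2 * α / (2 * α + 1)) * (Hol ^ 2) ^ (1 / (2 * α + 1)))) ^ r * Q :=
        integral_norm_rpow_le_of_sq_norm_le hL.le hp hφ
          fun t ht => sq_norm_le_of_holder hα hL hφ hHol hHolder ht
    _ ≤ 4 ^ r * ((Q / L) ^ r + (Q ^ (2 * α / (2 * α + 1)) * (Hol ^ 2) ^ (1 / (2 * α + 1))) ^ r)
          * Q := by
        rw [mul_rpow (by norm_num) (le_max_of_le_left (by positivity))]
        gcongr
        exact max_rpow_le_rpow_add_rpow r (by positivity) (by positivity)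
    _ = 4 ^ r / L ^ r * Q ^ (r + 1)
          + 4 ^ r * Q ^ (2 * α / (2 * α + 1) * r + 1) * (Hol ^ 2) ^ (1 / (2 * α + 1) * r) := by
        rw [hrpow_succ r (by positivity), hrpow_succ (2 * α / (2 * α + 1) * r) (by positivity),
          div_rpow hQ hL.le, mul_rpow (by positivity) (by positivity), ← rpow_mul hQ,
          ← rpow_mul (by positivity)]
        ring
    _ = _ := by
        rw [show r + 1 = p / 2 by ring,
          show 2 * α / (2 * α + 1) * r + 1 = (α * p + 1) / (2 * α + 1) by field_simp; ring,
          show 1 / (2 * α + 1) * r = (p - 2) / (4 * α + 2) by field_simp; ring]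

end Holder

theorem Lp_bound_with_small_holder_term
    (L α p : ℝ) (hL : 0 < L) (hp2 : 2 < p)
    (hα0 : 0 < α) (hαp : (p - 2) / (2 * α + 1) < 2)
    (δ : ℝ) (hδ : 0 < δ) :
    ∃ C₁ C₂ : ℝ, ∀ lam : ℝ, 0 < lam →
      ∀ φ : ℝ → ℂ, ContinuousOn φ (Set.Icc 0 L) →
      ∀ Hol : ℝ, 0 ≤ Hol →
        (∀ x ∈ Set.Icc 0 L, ∀ y ∈ Set.Icc 0 L, ‖φ y - φ x‖ ≤ Hol * |y - x| ^ α) →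
        lam * (∫ t in (0:ℝ)..L, ‖φ t‖ ^ p)
          ≤ C₁ * lam * (Real.sqrt (∫ t in (0:ℝ)..L, ‖φ t‖ ^ 2)) ^ p
            + C₂ * lam ^ ((4 * α + 2) / (4 * α + 4 - p))
                * (Real.sqrt (∫ t in (0:ℝ)..L, ‖φ t‖ ^ 2))
                    ^ ((4 * α * p + 4) / (4 * α + 4 - p))
            + δ * Hol ^ 2 := by
  set r := (p - 2) / 2
  set θ := (p - 2) / (4 * α + 2) with hθ
  have hp : p - 2 < 4 * α + 2 := by rw [div_lt_iff₀ (by linarith)] at hαp; linarith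
  have hθ₀ : 0 < θ := div_pos (by linarith) (by linarith)
  have hθ₁ : θ < 1 := (div_lt_one (by linarith)).mpr hp
  have hθ' : 1 / (1 - θ) = (4 * α + 2) / (4 * α + 4 - p) := by
    have : 4 * α + 4 - p ≠ 0 := by linarith
    rw [show 1 - θ = (4 * α + 4 - p) / (4 * α + 2) by rw [hθ]; field_simp; ring, one_div_div]
  refine ⟨4 ^ r / L ^ r, δ ^ (-θ / (1 - θ)) * (4 ^ r) ^ (1 / (1 - θ)), ?_⟩
  intro lam hlam φ hφ Hol hHol hHolder
  set Q := ∫ t in (0 : ℝ)..L, ‖φ t‖ ^ 2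
  have hQ : 0 ≤ Q := intervalIntegral.integral_nonneg hL.le fun u _ => by positivity
  set b := 4 ^ r * lam * Q ^ ((α * p + 1) / (2 * α + 1))
  calc lam * ∫ t in (0 : ℝ)..L, ‖φ t‖ ^ p
      ≤ lam * (4 ^ r / L ^ r * Q ^ (p / 2)
          + 4 ^ r * Q ^ ((α * p + 1) / (2 * α + 1)) * (Hol ^ 2) ^ θ) :=
        mul_le_mul_of_nonneg_left
          (integral_norm_rpow_le_of_holder hα0 hL hp2.le hφ hHol hHolder) hlam.le
    _ = 4 ^ r / L ^ r * lam * √Q ^ p + (Hol ^ 2) ^ θ * b := by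
        rw [rpow_eq_sqrt_rpow hQ, mul_div_cancel₀ p two_ne_zero]; ring
    _ ≤ 4 ^ r / L ^ r * lam * √Q ^ p
          + (δ * Hol ^ 2 + δ ^ (-θ / (1 - θ)) * b ^ (1 / (1 - θ))) := by
        gcongr
        exact rpow_mul_le_mul_add_mul_rpow (sq_nonneg Hol) (by positivity) hθ₀ hθ₁ hδ
    _ = _ := by
        rw [mul_rpow (by positivity) (by positivity), mul_rpow (by positivity) hlam.le,
          ← rpow_mul hQ, rpow_eq_sqrt_rpow hQ, hθ',
          show 2 * ((α * p + 1) / (2 * α + 1) * ((4 * α + 2) / (4 * α + 4 - p)))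
            = (4 * α * p + 4) / (4 * α + 4 - p) by field_simp; ring]
        ring
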